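/- Let b > 1, let α ≥ β ≥ 0 be real numbers, and let k, ℓ₁, ℓ₂ be integers with ℓ₂ ≥ 1 and ℓ₁ + ℓ₂ < k. Let f; x_1, …, x_{k−ℓ₂}; x'_1, …, x'_{ℓ₂}; d_1, …, d_{ℓ₂}; and d_{i,j} for ℓ₁+1 ≤ i ≤ k−ℓ₂, 1 ≤ j ≤ ℓ₂ be random variables taking values in finite sets on a common probability space satisfying: (i) I(f; (x_1, …, x_{ℓ₁}, d_1, …, d_{ℓ₂})) = 0; (ii) H(x'_j | d_j) = 0 for every j; (iii) H(d_{i,j} | d_j) = 0 for all i, j; (iv) H(f | x_1, …, x_{k−ℓ₂}, x'_1, …, x'_{ℓ₂}) = 0; (v) H(x_i) ≤ α for every ℓ₁+1 ≤ i ≤ k−ℓ₂; and additionally (vi) for every ℓ₁+1 ≤ i ≤ k−ℓ₂, the download d_{i,1} is a function of the node content, H(d_{i,1} | x_i) = 0, and H(d_{i,1}) ≥ β. Then H(f) ≤ (k − ℓ₁ − ℓ₂)·(α − β). -/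

import Mathlib

/-! Finite-probability-space Shannon entropy framework. -/

/-- `p` is a probability mass function on the finite sample space `Ω`. -/
def IsPMF {Ω : Type} [Fintype Ω] (p : Ω → ℝ) : Prop :=
  (∀ ω, 0 ≤ p ω) ∧ ∑ ω, p ω = 1

/-- Probability that the random variable `X` takes the value `x`. -/
noncomputable def prEq {Ω : Type} [Fintype Ω] (p : Ω → ℝ) {S : Type} [DecidableEq S]
    (X : Ω → S) (x : S) : ℝ :=
  ∑ ω, if X ω = x then p ω else 0

/-- Shannon entropy (base `b`) of the random variable `X` on the finite probability
space `(Ω, p)`.  Terms with probability `0` vanish since `Real.logb b 0 = 0`. -/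
noncomputable def entH {Ω : Type} [Fintype Ω] (b : ℝ) (p : Ω → ℝ) {S : Type}
    [Fintype S] [DecidableEq S] (X : Ω → S) : ℝ :=
  -∑ x, prEq p X x * Real.logb b (prEq p X x)

/-- Conditional entropy `H(X | Y) = H(X, Y) - H(Y)`. -/
noncomputable def condH {Ω : Type} [Fintype Ω] (b : ℝ) (p : Ω → ℝ) {S T : Type}
    [Fintype S] [DecidableEq S] [Fintype T] [DecidableEq T]
    (X : Ω → S) (Y : Ω → T) : ℝ :=
  entH b p (fun ω => (X ω, Y ω)) - entH b p Y

/-- Mutual information `I(X; Y) = H(X) + H(Y) - H(X, Y)`. -/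
noncomputable def mutI {Ω : Type} [Fintype Ω] (b : ℝ) (p : Ω → ℝ) {S T : Type}
    [Fintype S] [DecidableEq S] [Fintype T] [DecidableEq T]
    (X : Ω → S) (Y : Ω → T) : ℝ :=
  entH b p X + entH b p Y - entH b p (fun ω => (X ω, Y ω))

/-- Independence of two random variables on a finite probability space. -/
def IndepRV {Ω : Type} [Fintype Ω] (p : Ω → ℝ) {S T : Type} [DecidableEq S] [DecidableEq T]
    (X : Ω → S) (Y : Ω → T) : Prop :=
  ∀ x y, prEq p (fun ω => (X ω, Y ω)) (x, y) = prEq p X x * prEq p Y y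

/-! The eavesdropper's view `E = (x_1, …, x_{ℓ₁}, d_1, …, d_{ℓ₂})` is independent of `f`, so
`H(f) = H(f | E)`. Together with `E`, the unobserved nodes `N = (x_{ℓ₁+1}, …, x_{k-ℓ₂})` determine
every repaired node (through `d_j`) and hence the file, so `H(f | E) ≤ H(N | E) ≤ ∑ᵢ H(x_i | E)`.
Since `E` contains `d_1`, which determines `d_{i,1}`, which in turn is determined by `x_i`,
`H(x_i | E) ≤ H(x_i | d_{i,1}) = H(x_i) - H(d_{i,1}) ≤ α - β`. All the entropy inequalities used
reduce to submodularity, which follows from Gibbs' inequality. -/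

open Real

section Entropy

variable {Ω : Type} [Fintype Ω] {p : Ω → ℝ} {S T U : Type} [DecidableEq S] [DecidableEq T]
  [DecidableEq U]

lemma prEq_nonneg (hp : ∀ ω, 0 ≤ p ω) (X : Ω → S) (s : S) : 0 ≤ prEq p X s :=
  Finset.sum_nonneg fun ω _ => by split_ifs <;> simp [hp ω]

lemma sum_prEq_mul [Fintype S] (X : Ω → S) (φ : S → ℝ) :
    ∑ s, prEq p X s * φ s = ∑ ω, p ω * φ (X ω) := by
  simp only [prEq, Finset.sum_mul, ite_mul, zero_mul]
  rw [Finset.sum_comm]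
  simp

lemma sum_prEq [Fintype S] (X : Ω → S) : ∑ s, prEq p X s = ∑ ω, p ω := by
  simpa using sum_prEq_mul (p := p) X fun _ => 1

lemma sum_prEq_comp_mul [Fintype S] [Fintype T] (W : Ω → S) (g : S → T) {Y : Ω → T}
    (hY : Y = g ∘ W) (φ : T → ℝ) :
    ∑ s, prEq p W s * φ (g s) = ∑ t, prEq p Y t * φ t := by
  subst hY
  exact (sum_prEq_mul W (φ ∘ g)).trans (sum_prEq_mul (g ∘ W) φ).symm

lemma prEq_le_prEq_comp (hp : ∀ ω, 0 ≤ p ω) (W : Ω → S) (g : S → T) {Y : Ω → T}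
    (hY : Y = g ∘ W) (s : S) : prEq p W s ≤ prEq p Y (g s) :=
  Finset.sum_le_sum fun ω _ => by
    subst hY
    by_cases h : W ω = s
    · simp [h]
    · simp only [h, if_false]
      split_ifs <;> simp [hp ω]

lemma sum_prEq_prod_left [Fintype S] (A : Ω → S) (B : Ω → T) (t : T) :
    ∑ s, prEq p (fun ω => (A ω, B ω)) (s, t) = prEq p B t := by
  simp only [prEq, Prod.mk.injEq, ite_and]
  rw [Finset.sum_comm]
  simp

lemma sum_prEq_prod_right [Fintype T] (A : Ω → S) (B : Ω → T) (s : S) :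
    ∑ t, prEq p (fun ω => (A ω, B ω)) (s, t) = prEq p A s := by
  simp only [prEq, Prod.mk.injEq, ite_and]
  rw [Finset.sum_comm]
  simp

lemma sum_mul_logb_le_sum_mul_logb {ι : Type} [Fintype ι] {b : ℝ} (hb : 1 < b) {a q : ι → ℝ}
    (ha : ∀ i, 0 ≤ a i) (hq : ∀ i, 0 ≤ q i) (hqa : ∀ i, q i = 0 → a i = 0)
    (hsum : ∑ i, q i ≤ ∑ i, a i) :
    ∑ i, a i * logb b (q i) ≤ ∑ i, a i * logb b (a i) := by
  have hlogb : 0 < log b := log_pos hb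
  have hterm : ∀ i, a i * logb b (q i) ≤ a i * logb b (a i) + (q i - a i) / log b := by
    intro i
    rcases (ha i).eq_or_lt with h | h
    · simpa [← h] using div_nonneg (hq i) hlogb.le
    · have hqi : 0 < q i := (hq i).lt_of_ne fun h' => h.ne' (hqa i h'.symm)
      have hlog : a i * (log (q i) - log (a i)) ≤ q i - a i := calc
        a i * (log (q i) - log (a i)) = a i * log (q i / a i) := by rw [log_div hqi.ne' h.ne']
        _ ≤ a i * (q i / a i - 1) :=
          mul_le_mul_of_nonneg_left (log_le_sub_one_of_pos (div_pos hqi h)) h.le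
        _ = q i - a i := by field_simp
      have : a i * logb b (q i) - a i * logb b (a i) ≤ (q i - a i) / log b := by
        rw [logb, logb, ← mul_sub, ← sub_div, mul_div_assoc']
        exact div_le_div_of_nonneg_right hlog hlogb.le
      linarith
  calc ∑ i, a i * logb b (q i)
      ≤ ∑ i, (a i * logb b (a i) + (q i - a i) / log b) := Finset.sum_le_sum fun i _ => hterm i
    _ = ∑ i, a i * logb b (a i) + (∑ i, q i - ∑ i, a i) / log b := by
      rw [Finset.sum_add_distrib, ← Finset.sum_div, Finset.sum_sub_distrib]
    _ ≤ ∑ i, a i * logb b (a i) := by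
      linarith [div_nonpos_of_nonpos_of_nonneg (sub_nonpos.2 hsum) hlogb.le]

variable {b : ℝ}

lemma sum_prEq_mul_logb_prEq_comp [Fintype S] [Fintype T] (W : Ω → S) (g : S → T) {Y : Ω → T}
    (hY : Y = g ∘ W) : ∑ s, prEq p W s * logb b (prEq p Y (g s)) = -entH b p Y := by
  rw [entH, neg_neg]
  exact sum_prEq_comp_mul W g hY fun t => logb b (prEq p Y t)

theorem entH_comp_le [Fintype S] [Fintype T] (hb : 1 < b) (hp : ∀ ω, 0 ≤ p ω) (W : Ω → S)
    (g : S → T) {Y : Ω → T} (hY : Y = g ∘ W) : entH b p Y ≤ entH b p W := by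
  have hterm : ∀ s, prEq p W s * logb b (prEq p W s) ≤ prEq p W s * logb b (prEq p Y (g s)) := by
    intro s
    rcases (prEq_nonneg hp W s).eq_or_lt with h | h
    · simp [← h]
    · exact mul_le_mul_of_nonneg_left
        (logb_le_logb_of_le hb h (prEq_le_prEq_comp hp W g hY s)) h.le
  rw [← neg_neg (entH b p Y), ← sum_prEq_mul_logb_prEq_comp W g hY, entH]
  exact neg_le_neg (Finset.sum_le_sum fun s _ => hterm s)

theorem entH_eq_of_comp_of_comp [Fintype S] [Fintype T] (hb : 1 < b) (hp : ∀ ω, 0 ≤ p ω)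
    {W : Ω → S} {Y : Ω → T} (g : S → T) (h : T → S) (hY : Y = g ∘ W) (hW : W = h ∘ Y) :
    entH b p Y = entH b p W :=
  le_antisymm (entH_comp_le hb hp W g hY) (entH_comp_le hb hp Y h hW)

theorem entH_prod_comm [Fintype S] [Fintype T] (hb : 1 < b) (hp : ∀ ω, 0 ≤ p ω) (A : Ω → S)
    (B : Ω → T) : entH b p (fun ω => (A ω, B ω)) = entH b p (fun ω => (B ω, A ω)) :=
  entH_eq_of_comp_of_comp hb hp Prod.swap Prod.swap rfl rfl

noncomputable def markovJoint (p : Ω → ℝ) (A : Ω → S) (B : Ω → T) (C : Ω → U)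
    (w : S × T × U) : ℝ :=
  prEq p (fun ω => (A ω, B ω)) (w.1, w.2.1) * prEq p (fun ω => (B ω, C ω)) (w.2.1, w.2.2) /
    prEq p B w.2.1

lemma sum_markovJoint [Fintype S] [Fintype T] [Fintype U] (A : Ω → S) (B : Ω → T) (C : Ω → U) :
    ∑ w, markovJoint p A B C w = ∑ ω, p ω := by
  simp only [markovJoint, Fintype.sum_prod_type]
  rw [Finset.sum_comm]
  simp_rw [mul_div_right_comm _ _ (prEq p B _), ← Finset.mul_sum, sum_prEq_prod_right,
    ← Finset.sum_mul, ← Finset.sum_div, sum_prEq_prod_left, div_self_mul_self]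
  exact sum_prEq B

lemma markovJoint_nonneg (hp : ∀ ω, 0 ≤ p ω) (A : Ω → S) (B : Ω → T) (C : Ω → U)
    (w : S × T × U) : 0 ≤ markovJoint p A B C w :=
  div_nonneg (mul_nonneg (prEq_nonneg hp _ _) (prEq_nonneg hp _ _)) (prEq_nonneg hp _ _)

lemma prEq_le_prEq_marginals (hp : ∀ ω, 0 ≤ p ω) (A : Ω → S) (B : Ω → T) (C : Ω → U)
    (w : S × T × U) :
    prEq p (fun ω => (A ω, B ω, C ω)) w ≤ prEq p (fun ω => (A ω, B ω)) (w.1, w.2.1) ∧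
      prEq p (fun ω => (A ω, B ω, C ω)) w ≤ prEq p (fun ω => (B ω, C ω)) (w.2.1, w.2.2) ∧
      prEq p (fun ω => (A ω, B ω, C ω)) w ≤ prEq p B w.2.1 :=
  ⟨prEq_le_prEq_comp hp _ (fun w => (w.1, w.2.1)) rfl w,
    prEq_le_prEq_comp hp _ (fun w => (w.2.1, w.2.2)) rfl w,
    prEq_le_prEq_comp hp _ (fun w => w.2.1) rfl w⟩

lemma prEq_eq_zero_of_markovJoint_eq_zero (hp : ∀ ω, 0 ≤ p ω) (A : Ω → S) (B : Ω → T)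
    (C : Ω → U) (w : S × T × U) (hw : markovJoint p A B C w = 0) :
    prEq p (fun ω => (A ω, B ω, C ω)) w = 0 := by
  obtain ⟨hAB, hBC, hB⟩ := prEq_le_prEq_marginals hp A B C w
  refine le_antisymm ?_ (prEq_nonneg hp _ w)
  simp only [markovJoint, div_eq_zero_iff, mul_eq_zero] at hw
  rcases hw with (h | h) | h
  · exact h ▸ hAB
  · exact h ▸ hBC
  · exact h ▸ hB

theorem entH_submodular [Fintype S] [Fintype T] [Fintype U] (hb : 1 < b) (hp : ∀ ω, 0 ≤ p ω)
    (A : Ω → S) (B : Ω → T) (C : Ω → U) :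
    entH b p (fun ω => (A ω, B ω, C ω)) + entH b p B
      ≤ entH b p (fun ω => (A ω, B ω)) + entH b p (fun ω => (B ω, C ω)) := by
  set ABC := fun ω => (A ω, B ω, C ω)
  have hlog : ∀ w, prEq p ABC w * logb b (markovJoint p A B C w)
      = prEq p ABC w * logb b (prEq p (fun ω => (A ω, B ω)) (w.1, w.2.1))
        + prEq p ABC w * logb b (prEq p (fun ω => (B ω, C ω)) (w.2.1, w.2.2))
        - prEq p ABC w * logb b (prEq p B w.2.1) := by
    intro w
    obtain ⟨hAB, hBC, hB⟩ := prEq_le_prEq_marginals hp A B C w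
    rcases (prEq_nonneg hp ABC w).eq_or_lt with h | h
    · simp [← h]
    · rw [markovJoint, logb_div (mul_pos (h.trans_le hAB) (h.trans_le hBC)).ne'
        (h.trans_le hB).ne', logb_mul (h.trans_le hAB).ne' (h.trans_le hBC).ne']
      ring
  have hgibbs := sum_mul_logb_le_sum_mul_logb hb (prEq_nonneg hp ABC)
    (markovJoint_nonneg hp A B C) (prEq_eq_zero_of_markovJoint_eq_zero hp A B C)
    (by rw [sum_markovJoint, sum_prEq])
  simp only [hlog, Finset.sum_add_distrib, Finset.sum_sub_distrib] at hgibbs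
  rw [sum_prEq_mul_logb_prEq_comp ABC (fun w => (w.1, w.2.1)) (Y := fun ω => (A ω, B ω)) rfl,
    sum_prEq_mul_logb_prEq_comp ABC (fun w => (w.2.1, w.2.2)) (Y := fun ω => (B ω, C ω)) rfl,
    sum_prEq_mul_logb_prEq_comp ABC (fun w => w.2.1) (Y := B) rfl] at hgibbs
  rw [entH]
  linarith

variable [Fintype S] [Fintype T] [Fintype U]

lemma condH_nonneg (hb : 1 < b) (hp : ∀ ω, 0 ≤ p ω) (Y : Ω → S) (W : Ω → T) :
    0 ≤ condH b p Y W :=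
  sub_nonneg.2 (entH_comp_le hb hp _ Prod.snd rfl)

lemma condH_eq_zero_of_comp (hb : 1 < b) (hp : ∀ ω, 0 ≤ p ω) (W : Ω → T) (g : T → S)
    {Y : Ω → S} (hY : Y = g ∘ W) : condH b p Y W = 0 := by
  subst hY
  exact sub_eq_zero.2 (entH_eq_of_comp_of_comp hb hp (fun w => (g w, w)) Prod.snd rfl rfl)

theorem condH_le_condH_of_condH_eq_zero (hb : 1 < b) (hp : ∀ ω, 0 ≤ p ω) (A : Ω → S)
    {Z : Ω → T} {W : Ω → U} (hZW : condH b p Z W = 0) : condH b p A W ≤ condH b p A Z := by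
  have hsub := entH_submodular hb hp A Z W
  have hdrop := entH_comp_le hb hp (fun ω => (A ω, Z ω, W ω)) (fun w => (w.1, w.2.2))
    (Y := fun ω => (A ω, W ω)) rfl
  unfold condH at hZW ⊢
  linarith

lemma condH_eq_zero_trans (hb : 1 < b) (hp : ∀ ω, 0 ≤ p ω) {Z : Ω → S} {Y : Ω → T}
    {W : Ω → U} (hZY : condH b p Z Y = 0) (hYW : condH b p Y W = 0) : condH b p Z W = 0 :=
  le_antisymm (hZY ▸ condH_le_condH_of_condH_eq_zero hb hp Z hYW) (condH_nonneg hb hp Z W)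

lemma condH_eq_entH_sub_of_condH_eq_zero (hb : 1 < b) (hp : ∀ ω, 0 ≤ p ω) {A : Ω → S}
    {Z : Ω → T} (hZA : condH b p Z A = 0) : condH b p A Z = entH b p A - entH b p Z := by
  have := entH_prod_comm hb hp A Z
  unfold condH at hZA ⊢
  linarith

theorem condH_le_entH_sub_of_condH_eq_zero (hb : 1 < b) (hp : ∀ ω, 0 ≤ p ω) {A : Ω → S}
    {Z : Ω → T} {W : Ω → U} (hZW : condH b p Z W = 0) (hZA : condH b p Z A = 0) :
    condH b p A W ≤ entH b p A - entH b p Z :=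
  condH_eq_entH_sub_of_condH_eq_zero hb hp hZA ▸ condH_le_condH_of_condH_eq_zero hb hp A hZW

theorem condH_prod_le (hb : 1 < b) (hp : ∀ ω, 0 ≤ p ω) (A : Ω → S) (B : Ω → T) (W : Ω → U) :
    condH b p (fun ω => (A ω, B ω)) W ≤ condH b p A W + condH b p B W := by
  have hsub := entH_submodular hb hp A W B
  have hassoc : entH b p (fun ω => ((A ω, B ω), W ω)) = entH b p (fun ω => (A ω, W ω, B ω)) :=
    entH_eq_of_comp_of_comp hb hp (fun w => ((w.1, w.2.2), w.2.1)) (fun w => (w.1.1, w.2, w.1.2))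
      rfl rfl
  have hcomm := entH_prod_comm hb hp W B
  unfold condH
  linarith

lemma condH_prod_eq_zero (hb : 1 < b) (hp : ∀ ω, 0 ≤ p ω) {A : Ω → S} {B : Ω → T} {W : Ω → U}
    (hA : condH b p A W = 0) (hB : condH b p B W = 0) : condH b p (fun ω => (A ω, B ω)) W = 0 :=
  le_antisymm (by linarith [condH_prod_le hb hp A B W]) (condH_nonneg hb hp _ W)

theorem condH_pi_le_sum (hb : 1 < b) (hp : ∀ ω, 0 ≤ p ω) {n : ℕ} {V : Fin n → Type}
    [∀ i, Fintype (V i)] [∀ i, DecidableEq (V i)] (Y : ∀ i, Ω → V i) (W : Ω → U) :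
    condH b p (fun ω i => Y i ω) W ≤ ∑ i, condH b p (Y i) W := by
  induction n with
  | zero =>
    simpa using (condH_eq_zero_of_comp hb hp W (fun _ i => i.elim0)
      (funext fun _ => funext fun i => i.elim0)).le
  | succ n ih =>
    have hsplit : condH b p (fun ω i => Y i ω) W
        = condH b p (fun ω => (Y 0 ω, fun i : Fin n => Y i.succ ω)) W := by
      unfold condH
      congr 1
      exact entH_eq_of_comp_of_comp hb hp (fun w => (Fin.cons w.1.1 w.1.2, w.2))
        (fun w => ((w.1 0, Fin.tail w.1), w.2))
        (funext fun ω => Prod.ext (Fin.cons_self_tail fun i => Y i ω).symm rfl) rfl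
    rw [hsplit, Fin.sum_univ_succ]
    linarith [condH_prod_le hb hp (Y 0) (fun ω (i : Fin n) => Y i.succ ω) W,
      ih fun i => Y i.succ]

lemma condH_pi_eq_zero (hb : 1 < b) (hp : ∀ ω, 0 ≤ p ω) {n : ℕ} {V : Fin n → Type}
    [∀ i, Fintype (V i)] [∀ i, DecidableEq (V i)] {Y : ∀ i, Ω → V i} {W : Ω → U}
    (hY : ∀ i, condH b p (Y i) W = 0) : condH b p (fun ω i => Y i ω) W = 0 :=
  le_antisymm (by simpa [hY] using condH_pi_le_sum hb hp Y W) (condH_nonneg hb hp _ W)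

theorem entH_le_condH_of_mutI_eq_zero (hb : 1 < b) (hp : ∀ ω, 0 ≤ p ω) {Y : Ω → S} {E : Ω → T}
    {N : Ω → U} (hYE : mutI b p Y E = 0) (hY : condH b p Y (fun ω => (N ω, E ω)) = 0) :
    entH b p Y ≤ condH b p N E := by
  have hproj := entH_comp_le hb hp (fun ω => (Y ω, N ω, E ω)) (fun w => (w.1, w.2.2))
    (Y := fun ω => (Y ω, E ω)) rfl
  unfold mutI at hYE
  unfold condH at hY ⊢
  linarith

end Entropy

theorem msr_secrecy_capacity_corollary_general
    {Ω : Type} [Fintype Ω] (b : ℝ) (hb : 1 < b) (p : Ω → ℝ) (hp : IsPMF p)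
    (α β : ℝ)
    (k l₁ l₂ : ℕ) (hl₂ : 1 ≤ l₂) (hk : l₁ + l₂ < k)
    {F : Type} [Fintype F] [DecidableEq F] (f : Ω → F)
    {X : ℕ → Type} [∀ i, Fintype (X i)] [∀ i, DecidableEq (X i)] (x : ∀ i, Ω → X i)
    {X' : ℕ → Type} [∀ j, Fintype (X' j)] [∀ j, DecidableEq (X' j)] (x' : ∀ j, Ω → X' j)
    {D : ℕ → Type} [∀ j, Fintype (D j)] [∀ j, DecidableEq (D j)] (d : ∀ j, Ω → D j)
    {DD : ℕ → ℕ → Type} [∀ i j, Fintype (DD i j)] [∀ i j, DecidableEq (DD i j)]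
    (dd : ∀ i j, Ω → DD i j)
    -- (i) security against the (ℓ₁, ℓ₂)-eavesdropper
    (hsec : mutI b p f (fun ω =>
      ((fun i : Fin l₁ => x (i.val + 1) ω), (fun j : Fin l₂ => d (j.val + 1) ω))) = 0)
    -- (ii) each repaired node is a function of its downloads
    (hrep : ∀ j, 1 ≤ j → j ≤ l₂ → condH b p (x' j) (d j) = 0)
    -- (iii) each per-node download is a function of the total download
    (hdown : ∀ i j, l₁ + 1 ≤ i → i ≤ k - l₂ → 1 ≤ j → j ≤ l₂ →
      condH b p (dd i j) (d j) = 0)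
    -- (iv) reconstruction from the k nodes x_1, …, x_{k-ℓ₂}, x'_1, …, x'_{ℓ₂}
    (hrec : condH b p f (fun ω =>
      ((fun i : Fin (k - l₂) => x (i.val + 1) ω), (fun j : Fin l₂ => x' (j.val + 1) ω))) = 0)
    -- (v) per-node storage bound
    (hstore : ∀ i, l₁ + 1 ≤ i → i ≤ k - l₂ → entH b p (x i) ≤ α)
    -- (vi) the download d_{i,1} is a function of the node content and has entropy ≥ β
    (hfun : ∀ i, l₁ + 1 ≤ i → i ≤ k - l₂ → condH b p (dd i 1) (x i) = 0)
    (hent : ∀ i, l₁ + 1 ≤ i → i ≤ k - l₂ → β ≤ entH b p (dd i 1)) :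
    entH b p f ≤ ((k : ℝ) - l₁ - l₂) * (α - β) := by
  set E := fun ω => ((fun i : Fin l₁ => x (i.val + 1) ω), (fun j : Fin l₂ => d (j.val + 1) ω))
  set N := fun ω (i : Fin (k - l₂ - l₁)) => x (l₁ + i.val + 1) ω
  have hnode : ∀ i : Fin (k - l₂ - l₁), condH b p (x (l₁ + i.val + 1)) E ≤ α - β := by
    intro i
    have hi₁ : l₁ + 1 ≤ l₁ + i.val + 1 := by omega
    have hi₂ : l₁ + i.val + 1 ≤ k - l₂ := by omega
    have hd₁ : condH b p (d 1) E = 0 := condH_eq_zero_of_comp hb hp.1 E (fun e => e.2 ⟨0, hl₂⟩) rfl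
    have hdd := condH_eq_zero_trans hb hp.1 (hdown _ 1 hi₁ hi₂ le_rfl hl₂) hd₁
    linarith [condH_le_entH_sub_of_condH_eq_zero hb hp.1 hdd (hfun _ hi₁ hi₂), hstore _ hi₁ hi₂,
      hent _ hi₁ hi₂]
  have hx : ∀ i : Fin (k - l₂), condH b p (x (i.val + 1)) (fun ω => (N ω, E ω)) = 0 := by
    rintro ⟨n, hn⟩
    rcases lt_or_ge n l₁ with h | h
    · exact condH_eq_zero_of_comp hb hp.1 _ (fun w => w.2.1 ⟨n, h⟩) rfl
    · obtain ⟨j, rfl⟩ := Nat.exists_eq_add_of_le h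
      exact condH_eq_zero_of_comp hb hp.1 _ (fun w => w.1 ⟨j, by omega⟩) rfl
  have hx' : ∀ j : Fin l₂, condH b p (x' (j.val + 1)) (fun ω => (N ω, E ω)) = 0 := fun j =>
    condH_eq_zero_trans hb hp.1 (hrep _ (by omega) j.isLt)
      (condH_eq_zero_of_comp hb hp.1 _ (fun w => w.2.2 j) rfl)
  have hfile : condH b p f (fun ω => (N ω, E ω)) = 0 := condH_eq_zero_trans hb hp.1 hrec
    (condH_prod_eq_zero hb hp.1 (condH_pi_eq_zero hb hp.1 hx) (condH_pi_eq_zero hb hp.1 hx'))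
  have hcard : ((k - l₂ - l₁ : ℕ) : ℝ) = k - l₁ - l₂ := by
    rw [Nat.cast_sub (by omega), Nat.cast_sub (by omega)]
    ring
  calc entH b p f ≤ condH b p N E := entH_le_condH_of_mutI_eq_zero hb hp.1 hsec hfile
    _ ≤ ∑ i : Fin (k - l₂ - l₁), condH b p (x (l₁ + i.val + 1)) E := condH_pi_le_sum hb hp.1 _ E
    _ ≤ ∑ _i : Fin (k - l₂ - l₁), (α - β) := Finset.sum_le_sum fun i _ => hnode i
    _ = ((k : ℝ) - l₁ - l₂) * (α - β) := by
      rw [Finset.sum_const, Finset.card_univ, Fintype.card_fin, nsmul_eq_mul, hcard]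

/-- **Corollary: secure file size bound `H(f) ≤ (k - ℓ₁ - ℓ₂)(α - β)` at the MSR point.**
Same setting as the general MSR secrecy bound, with the additional hypothesis that for
each unobserved node `i` the download `d_{i,1}` is a function of the node content and has
entropy at least `β`. -/
theorem msr_secrecy_capacity_corollary
    {Ω : Type} [Fintype Ω] (b : ℝ) (hb : 1 < b) (p : Ω → ℝ) (hp : IsPMF p)
    (α β : ℝ) (hβ0 : 0 ≤ β) (hβα : β ≤ α)
    (k l₁ l₂ : ℕ) (hl₂ : 1 ≤ l₂) (hk : l₁ + l₂ < k)
    {F : Type} [Fintype F] [DecidableEq F] (f : Ω → F)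
    {X : ℕ → Type} [∀ i, Fintype (X i)] [∀ i, DecidableEq (X i)] (x : ∀ i, Ω → X i)
    {X' : ℕ → Type} [∀ j, Fintype (X' j)] [∀ j, DecidableEq (X' j)] (x' : ∀ j, Ω → X' j)
    {D : ℕ → Type} [∀ j, Fintype (D j)] [∀ j, DecidableEq (D j)] (d : ∀ j, Ω → D j)
    {DD : ℕ → ℕ → Type} [∀ i j, Fintype (DD i j)] [∀ i j, DecidableEq (DD i j)]
    (dd : ∀ i j, Ω → DD i j)
    -- (i) security against the (ℓ₁, ℓ₂)-eavesdropper
    (hsec : mutI b p f (fun ω =>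
      ((fun i : Fin l₁ => x (i.val + 1) ω), (fun j : Fin l₂ => d (j.val + 1) ω))) = 0)
    -- (ii) each repaired node is a function of its downloads
    (hrep : ∀ j, 1 ≤ j → j ≤ l₂ → condH b p (x' j) (d j) = 0)
    -- (iii) each per-node download is a function of the total download
    (hdown : ∀ i j, l₁ + 1 ≤ i → i ≤ k - l₂ → 1 ≤ j → j ≤ l₂ →
      condH b p (dd i j) (d j) = 0)
    -- (iv) reconstruction from the k nodes x_1, …, x_{k-ℓ₂}, x'_1, …, x'_{ℓ₂}
    (hrec : condH b p f (fun ω =>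
      ((fun i : Fin (k - l₂) => x (i.val + 1) ω), (fun j : Fin l₂ => x' (j.val + 1) ω))) = 0)
    -- (v) per-node storage bound
    (hstore : ∀ i, l₁ + 1 ≤ i → i ≤ k - l₂ → entH b p (x i) ≤ α)
    -- (vi) the download d_{i,1} is a function of the node content and has entropy ≥ β
    (hfun : ∀ i, l₁ + 1 ≤ i → i ≤ k - l₂ → condH b p (dd i 1) (x i) = 0)
    (hent : ∀ i, l₁ + 1 ≤ i → i ≤ k - l₂ → β ≤ entH b p (dd i 1)) :
    entH b p f ≤ ((k : ℝ) - l₁ - l₂) * (α - β) :=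
  msr_secrecy_capacity_corollary_general b hb p hp α β k l₁ l₂ hl₂ hk f x x' d dd hsec hrep hdown
    hrec hstore hfun hent
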